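/- Let F be a field of characteristic zero, K = F(t), δ the derivation with δ|_F = 0 and δ(t) = t, and P ∈ Mₙ(F) traceless. Then (Mₙ(K), D_P) is split over (K, δ) itself—i.e., δ^c(Y) = Pᵀ·Y has a solution in GLₙ(K)—if and only if P is diagonalizable over F̄ and all eigenvalues of P are integers. -/

import Mathlib

/-!
In the Laurent expansion at `t = 0`, a derivation `δ` of `F(t)` with `δ F = 0` and `δ t = t` is
the Euler operator `t d/dt`, which multiplies the coefficient of `tᵏ` by `k`. Hence, for a
constant matrix `A = Pᵀ`, the equation `δ Y = A Y` says exactly that every Laurent coefficient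
`Yₖ` of `Y` satisfies `A Yₖ = k Yₖ`. If `Y` is invertible, only the finitely many eigenvalues `k`
of `A` occur, `∏ₖ (A - k)` kills every `Yₖ`, hence `Y`, hence is zero: `A` is annihilated by a
product of distinct factors `X - k` with `k ∈ ℤ`, i.e. it is diagonalizable with integer
eigenvalues. Conversely, if `A S = S diag(dᵢ)` with `dᵢ ∈ ℤ`, then `Y = S diag(t^dᵢ)` is an
invertible solution. Annihilation by such a polynomial is insensitive to transposing and to
extending scalars to the algebraic closure.
-/

open Polynomial
open scoped RatFunc

namespace LaurentSeries

variable {R : Type*} [CommRing R]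

noncomputable def euler : LaurentSeries R →ₗ[R] LaurentSeries R where
  toFun f :=
    { coeff k := k * f.coeff k
      isPWO_support' := f.isPWO_support.mono (Function.support_mul_subset_right _ _) }
  map_add' f g := by ext k; simp [mul_add]
  map_smul' r f := by ext k; simp [mul_left_comm]

@[simp] lemma euler_coeff (f : LaurentSeries R) (k : ℤ) : (euler f).coeff k = k * f.coeff k :=
  rfl

lemma euler_single (m : ℤ) (a : R) :
    euler (HahnSeries.single m a) = HahnSeries.single m (m * a) := by
  ext k
  rcases eq_or_ne k m with rfl | h <;> simp [*]

lemma euler_mul (f g : LaurentSeries R) : euler (f * g) = euler f * g + f * euler g := by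
  ext k
  have hf : (euler f).support ⊆ f.support := Function.support_mul_subset_right _ _
  have hg : (euler g).support ⊆ g.support := Function.support_mul_subset_right _ _
  rw [HahnSeries.coeff_add, euler_coeff, HahnSeries.coeff_mul,
    HahnSeries.coeff_mul_left' f.isPWO_support hf,
    HahnSeries.coeff_mul_right' g.isPWO_support hg, Finset.mul_sum, ← Finset.sum_add_distrib]
  refine Finset.sum_congr rfl fun ij hij => ?_
  rw [euler_coeff, euler_coeff, ← (Finset.mem_antidiagonal.mp hij).2.2]
  push_cast
  ring

end LaurentSeries

def Derivation.ofLeibniz {R A : Type*} [CommSemiring R] [CommRing A] [Algebra R A] (d : A → A)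
    (hadd : ∀ x y, d (x + y) = d x + d y) (hmul : ∀ x y, d (x * y) = d x * y + x * d y)
    (halg : ∀ r, d (algebraMap R A r) = 0) : Derivation R A A :=
  Derivation.mk'
    { toFun := d
      map_add' := hadd
      map_smul' r x := by simp [Algebra.smul_def, hmul, halg] }
    fun x y => by rw [LinearMap.coe_mk, AddHom.coe_mk, hmul, smul_eq_mul, smul_eq_mul]; ring

namespace RatFunc

theorem derivation_ext {K : Type*} [Field K] {M : Type*} [AddCommGroup M]
    [Module (RatFunc K) M] [Module K M] {D₁ D₂ : Derivation K (RatFunc K) M}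
    (h : D₁ X = D₂ X) : D₁ = D₂ := by
  have hpoly (p : K[X]) :
      D₁ (algebraMap K[X] (RatFunc K) p) = D₂ (algebraMap K[X] (RatFunc K) p) := by
    rw [← aeval_X_left_eq_algebraMap, Derivation.map_aeval, Derivation.map_aeval, h]
  ext f
  rw [← num_div_denom f, Derivation.leibniz_div, Derivation.leibniz_div, hpoly, hpoly]

variable {F : Type*} [Field F]

@[simp] lemma coe_C (a : F) : ((C a : RatFunc F) : LaurentSeries F) = HahnSeries.C a := by
  rw [← algebraMap_C, ← IsScalarTower.algebraMap_apply]
  simp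

instance : IsScalarTower F (RatFunc F) (LaurentSeries F) where
  smul_assoc a f x := by
    rw [Algebra.smul_def f x, Algebra.smul_def (a • f), Algebra.smul_def a f, map_mul,
      algebraMap_eq_C, coe_C, mul_assoc, HahnSeries.C_mul_eq_smul]

noncomputable def eulerDerivation : Derivation F (RatFunc F) (LaurentSeries F) :=
  Derivation.mk'
    { toFun f := LaurentSeries.euler (f : LaurentSeries F)
      map_add' f g := by simp
      map_smul' a f := by
        rw [RingHom.id_apply, ← map_smul]
        exact congrArg _ (algebraMap.coe_smul a f _) }
    fun f g => by
      simp [Algebra.smul_def, LaurentSeries.euler_mul]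
      ring

theorem coe_derivation_apply (D : Derivation F (RatFunc F) (RatFunc F)) (hX : D X = X)
    (f : RatFunc F) :
    ((D f : RatFunc F) : LaurentSeries F) = LaurentSeries.euler (f : LaurentSeries F) := by
  have : (Algebra.linearMap (RatFunc F) (LaurentSeries F)).compDer D = eulerDerivation := by
    refine derivation_ext ?_
    simp [eulerDerivation, hX, LaurentSeries.euler_single]
  exact Derivation.congr_fun this f

end RatFunc

namespace Matrix

variable {ι : Type*} {F : Type*} [Field F]

noncomputable def laurentCoeff (Y : Matrix ι ι (RatFunc F)) (k : ℤ) : Matrix ι ι F :=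
  Y.map fun y => (y : LaurentSeries F).coeff k

lemma laurentCoeff_map_mul [Fintype ι] (A : Matrix ι ι F) (Y : Matrix ι ι (RatFunc F))
    (k : ℤ) :
    laurentCoeff (A.map (algebraMap F (RatFunc F)) * Y) k = A * laurentCoeff Y k := by
  ext i j
  simp [laurentCoeff, mul_apply]

lemma laurentCoeff_map_derivation (D : Derivation F (RatFunc F) (RatFunc F))
    (hX : D RatFunc.X = RatFunc.X) (Y : Matrix ι ι (RatFunc F)) (k : ℤ) :
    laurentCoeff (Y.map D) k = (k : F) • laurentCoeff Y k := by
  ext i j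
  simp [laurentCoeff, RatFunc.coe_derivation_apply D hX]

lemma laurentCoeff_injective :
    Function.Injective (laurentCoeff : Matrix ι ι (RatFunc F) → ℤ → Matrix ι ι F) := by
  intro Y Z h
  ext i j
  apply (algebraMap (RatFunc F) (LaurentSeries F)).injective
  ext k
  exact congr_fun₂ (congr_fun h k) i j

theorem map_derivation_eq_map_mul_iff [Fintype ι] (D : Derivation F (RatFunc F) (RatFunc F))
    (hX : D RatFunc.X = RatFunc.X) (A : Matrix ι ι F) (Y : Matrix ι ι (RatFunc F)) :
    Y.map D = A.map (algebraMap F (RatFunc F)) * Y ↔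
      ∀ k : ℤ, A * laurentCoeff Y k = (k : F) • laurentCoeff Y k := by
  rw [← laurentCoeff_injective.eq_iff, funext_iff]
  exact forall_congr' fun k => by
    rw [laurentCoeff_map_derivation D hX, laurentCoeff_map_mul, eq_comm]

end Matrix

lemma spectrum.mem_of_mul_eq_smul {R B : Type*} [CommSemiring R] [Ring B] [Algebra R B]
    {a c : B} {r : R} (h : a * c = r • c) (hc : c ≠ 0) : r ∈ spectrum R a := by
  intro hu
  refine hc (hu.mul_left_cancel ?_)
  rw [mul_zero, sub_mul, h, Algebra.algebraMap_eq_smul_one, smul_one_mul, sub_self]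

lemma Polynomial.aeval_units_conj {R B : Type*} [CommSemiring R] [Ring B] [Algebra R B] (u : Bˣ)
    (a : B) (p : R[X]) : aeval (↑u * a * ↑u⁻¹) p = ↑u * aeval a p * ↑u⁻¹ := by
  induction p using Polynomial.induction_on' with
  | add p q hp hq => simp [hp, hq, mul_add, add_mul]
  | monomial k r =>
    rw [aeval_monomial, aeval_monomial, Units.conj_pow, ← mul_assoc, ← mul_assoc,
      Algebra.commutes r (u : B), mul_assoc _ (algebraMap R B r)]

/-- For a matrix over a field of characteristic zero this says that it is diagonalizable with
integer eigenvalues (`Matrix.isIntSemisimple_iff`). -/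
def IsIntSemisimple {B : Type*} [Ring B] [Algebra ℤ B] (a : B) : Prop :=
  ∃ s : Finset ℤ, aeval a (∏ m ∈ s, (X - C m)) = 0

section IsIntSemisimple

variable {B : Type*} [Ring B] [Algebra ℤ B]

lemma isIntSemisimple_map_iff {B' : Type*} [Ring B'] [Algebra ℤ B'] {φ : B →ₐ[ℤ] B'}
    (hφ : Function.Injective φ) {a : B} : IsIntSemisimple (φ a) ↔ IsIntSemisimple a :=
  exists_congr fun s => by rw [aeval_algHom_apply, map_eq_zero_iff φ hφ]

lemma IsIntSemisimple.units_conj {a : B} (h : IsIntSemisimple a) (u : Bˣ) :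
    IsIntSemisimple (↑u * a * ↑u⁻¹) :=
  h.imp fun s hs => by rw [aeval_units_conj, hs, mul_zero, zero_mul]

lemma aeval_prod_X_sub_C_mul_eq_zero {a c : B} {m : ℤ} {s : Finset ℤ} (hm : m ∈ s)
    (h : a * c = m • c) : aeval a (∏ m ∈ s, (X - C m)) * c = 0 := by
  rw [← Finset.prod_erase_mul _ _ hm, map_mul, mul_assoc]
  simp [sub_mul, h]

end IsIntSemisimple

namespace Matrix

variable {ι : Type*} [Fintype ι] [DecidableEq ι]

section CommRing

variable {R : Type*} [CommRing R]

lemma isIntSemisimple_transpose_iff {A : Matrix ι ι R} :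
    IsIntSemisimple Aᵀ ↔ IsIntSemisimple A := by
  have (p : ℤ[X]) : aeval Aᵀ p = (aeval A p)ᵀ :=
    MulOpposite.op_injective <| by
      rw [← aeval_op_apply, ← transposeAlgEquiv_apply ι ℤ R, ← transposeAlgEquiv_apply ι ℤ R,
        aeval_algEquiv]
      rfl
  simp only [IsIntSemisimple, this, transpose_eq_zero]

lemma isIntSemisimple_diagonal_intCast (k : ι → ℤ) :
    IsIntSemisimple (diagonal fun i => (k i : R)) := by
  refine ⟨Finset.univ.image k, ?_⟩
  rw [← diagonalAlgHom_apply (R := ℤ), aeval_algHom_apply, aeval_pi_apply,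
    diagonalAlgHom_apply, diagonal_eq_zero]
  funext i
  rw [Pi.zero_apply, map_prod]
  exact Finset.prod_eq_zero (Finset.mem_image_of_mem k (Finset.mem_univ i)) (by simp)

lemma _root_.IsIntSemisimple.mul_mul_nonsing_inv {A S : Matrix ι ι R} (h : IsIntSemisimple A)
    (hS : IsUnit S.det) : IsIntSemisimple (S * A * S⁻¹) := by
  have hu := (isUnit_iff_isUnit_det S).mpr hS
  have := h.units_conj hu.unit
  rwa [coe_units_inv, hu.unit_spec] at this

lemma spectrum_mul_mul_inv {A S : Matrix ι ι R} (hS : IsUnit S.det) :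
    spectrum R (S * A * S⁻¹) = spectrum R A := by
  have hu := (isUnit_iff_isUnit_det S).mpr hS
  rw [← hu.unit_spec, ← coe_units_inv, spectrum.units_conjugate]

end CommRing

section Field

variable {K : Type*} [Field K]

lemma exists_mul_eq_mul_diagonal_of_span_eq_top {κ : Type*} (A : Matrix ι ι K) (v : κ → K)
    (h : Submodule.span K {x | ∃ m, A *ᵥ x = v m • x} = ⊤) :
    ∃ S : Matrix ι ι K, IsUnit S.det ∧ ∃ d : ι → κ, A * S = S * diagonal (v ∘ d) := by
  obtain ⟨b, hbV, hbspan, hbli⟩ := exists_linearIndependent K {x | ∃ m, A *ᵥ x = v m • x}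
  let basis₀ := Module.Basis.mk hbli (by rw [Subtype.range_coe, hbspan, h])
  let basis := basis₀.reindex (basis₀.indexEquiv (Pi.basisFun K ι))
  have hbasis (j : ι) : ∃ m, A *ᵥ basis j = v m • basis j := by
    simpa [basis, basis₀] using hbV ((basis₀.indexEquiv (Pi.basisFun K ι)).symm j).2
  choose d hd using hbasis
  refine ⟨(of fun j => basis j)ᵀ, ?_, d, ?_⟩
  · exact (isUnit_iff_isUnit_det _).mp
      (linearIndependent_cols_iff_isUnit.mp basis.linearIndependent)
  · ext i j
    rw [mul_diagonal]
    simpa [mul_apply, mulVec, dotProduct, mul_comm] using congr_fun (hd j) i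

variable [CharZero K]

lemma _root_.IsIntSemisimple.span_eigenvectors_eq_top {A : Matrix ι ι K}
    (h : IsIntSemisimple A) :
    Submodule.span K {x | ∃ m : ℤ, A *ᵥ x = (m : K) • x} = ⊤ := by
  obtain ⟨s, hs⟩ := h
  set v : ℤ → K := Int.cast
  have hnodal : aeval A (Lagrange.nodal s v) = 0 := by
    have : Lagrange.nodal s v = (∏ m ∈ s, (X - C m)).map (algebraMap ℤ K) := by
      simp [Lagrange.nodal, Polynomial.map_prod, v]
    rw [this, aeval_map_algebraMap, hs]
  rw [Submodule.eq_top_iff']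
  intro x
  rcases s.eq_empty_or_nonempty with rfl | hne
  · have : (1 : Matrix ι ι K) = 0 := by simpa using hnodal
    rw [← one_mulVec x, this, zero_mulVec]
    exact zero_mem _
  have hE (m) (hm : m ∈ s) :
      A * aeval A (Lagrange.basis s v m) = (m : K) • aeval A (Lagrange.basis s v m) := by
    have key : (X - C (v m)) * Lagrange.basis s v m =
        C (Lagrange.nodalWeight s v m) * Lagrange.nodal s v := by
      rw [Lagrange.basis_eq_prod_sub_inv_mul_nodal_div hm, mul_left_comm,
        EuclideanDomain.mul_div_cancel' (X_sub_C_ne_zero _) (Lagrange.X_sub_C_dvd_nodal v hm)]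
    have := congrArg (aeval A) key
    rwa [map_mul, map_mul, hnodal, mul_zero, map_sub, aeval_X, aeval_C, sub_mul, sub_eq_zero,
      Algebra.algebraMap_eq_smul_one, smul_one_mul] at this
  have hx : x = ∑ m ∈ s, aeval A (Lagrange.basis s v m) *ᵥ x := by
    rw [← sum_mulVec, ← map_sum, Lagrange.sum_basis Int.cast_injective.injOn hne, map_one,
      one_mulVec]
  rw [hx]
  exact Submodule.sum_mem _ fun m hm =>
    Submodule.subset_span ⟨m, by rw [mulVec_mulVec, hE m hm, smul_mulVec]⟩

lemma _root_.IsIntSemisimple.exists_mul_eq_mul_diagonal {A : Matrix ι ι K}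
    (h : IsIntSemisimple A) :
    ∃ S : Matrix ι ι K, IsUnit S.det ∧ ∃ d : ι → ℤ, A * S = S * diagonal fun i => (d i : K) :=
  exists_mul_eq_mul_diagonal_of_span_eq_top A _ h.span_eigenvectors_eq_top

theorem isIntSemisimple_iff {A : Matrix ι ι K} :
    IsIntSemisimple A ↔
      (∃ R D : Matrix ι ι K, IsUnit R.det ∧ D.IsDiag ∧ A = R⁻¹ * D * R) ∧
        ∀ μ ∈ spectrum K A, ∃ k : ℤ, μ = k := by
  constructor
  · intro h
    obtain ⟨S, hS, d, hAS⟩ := h.exists_mul_eq_mul_diagonal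
    have hA : A = S * diagonal (fun i => (d i : K)) * S⁻¹ := by
      rw [← hAS, mul_nonsing_inv_cancel_right _ _ hS]
    refine ⟨⟨S⁻¹, diagonal fun i => (d i : K), isUnit_nonsing_inv_det _ hS,
      isDiag_diagonal _, ?_⟩, fun μ hμ => ?_⟩
    · rwa [nonsing_inv_nonsing_inv _ hS]
    · rw [hA, spectrum_mul_mul_inv hS, spectrum_diagonal] at hμ
      obtain ⟨i, rfl⟩ := hμ
      exact ⟨d i, rfl⟩
  · rintro ⟨⟨R, D, hR, hD, rfl⟩, hspec⟩
    obtain ⟨d, rfl⟩ : ∃ d, D = diagonal d := ⟨_, hD.diagonal_diag.symm⟩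
    have hR' : IsUnit R⁻¹.det := isUnit_nonsing_inv_det _ hR
    have hconj : R⁻¹ * diagonal d * R = R⁻¹ * diagonal d * R⁻¹⁻¹ := by
      rw [nonsing_inv_nonsing_inv _ hR]
    rw [hconj] at hspec ⊢
    rw [spectrum_mul_mul_inv hR', spectrum_diagonal] at hspec
    choose k hk using fun i => hspec (d i) ⟨i, rfl⟩
    obtain rfl : d = fun i => (k i : K) := funext hk
    exact (isIntSemisimple_diagonal_intCast k).mul_mul_nonsing_inv hR'

end Field

section RatFunc

variable {F : Type*} [Field F] [CharZero F]

theorem isIntSemisimple_of_laurentCoeff {A : Matrix ι ι F} {Y : Matrix ι ι (RatFunc F)}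
    (hY : IsUnit Y.det) (h : ∀ k : ℤ, A * laurentCoeff Y k = (k : F) • laurentCoeff Y k) :
    IsIntSemisimple A := by
  have hfin : {k : ℤ | laurentCoeff Y k ≠ 0}.Finite :=
    ((finite_spectrum A).preimage Int.cast_injective.injOn).subset
      fun k hk => spectrum.mem_of_mul_eq_smul (r := (k : F)) (h k) hk
  refine ⟨hfin.toFinset, ?_⟩
  set N := aeval A (∏ m ∈ hfin.toFinset, (X - C m))
  have hNc (k : ℤ) : N * laurentCoeff Y k = 0 := by
    by_cases hk : laurentCoeff Y k = 0
    · rw [hk, mul_zero]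
    · exact aeval_prod_X_sub_C_mul_eq_zero (hfin.mem_toFinset.mpr hk)
        (by rw [h k, Int.cast_smul_eq_zsmul])
  have hNY : N.map (algebraMap F (RatFunc F)) * Y = 0 :=
    laurentCoeff_injective <| funext fun k => by
      rw [laurentCoeff_map_mul, hNc]
      ext
      simp [laurentCoeff]
  have hN : N.map (algebraMap F (RatFunc F)) = 0 :=
    ((isUnit_iff_isUnit_det Y).mpr hY).mul_left_eq_zero.mp hNY
  exact map_injective (algebraMap F (RatFunc F)).injective
    (hN.trans (Matrix.map_zero _ (map_zero _)).symm)

theorem exists_isUnit_map_derivation_eq_mul_iff (D : Derivation F (RatFunc F) (RatFunc F))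
    (hX : D RatFunc.X = RatFunc.X) (A : Matrix ι ι F) :
    (∃ Y : Matrix ι ι (RatFunc F),
        IsUnit Y.det ∧ Y.map D = A.map (algebraMap F (RatFunc F)) * Y) ↔
      IsIntSemisimple A := by
  simp only [map_derivation_eq_map_mul_iff D hX]
  refine ⟨fun ⟨Y, hY, h⟩ => isIntSemisimple_of_laurentCoeff hY h, fun h => ?_⟩
  obtain ⟨S, hS, d, hAS⟩ := h.exists_mul_eq_mul_diagonal
  refine ⟨S.map (algebraMap F (RatFunc F)) * diagonal fun i => RatFunc.X ^ d i, ?_, fun k => ?_⟩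
  · rw [det_mul, det_diagonal, isUnit_iff_ne_zero, ← RingHom.mapMatrix_apply,
      ← RingHom.map_det]
    exact mul_ne_zero ((_root_.map_ne_zero _).mpr hS.ne_zero)
      (Finset.prod_ne_zero_iff.mpr fun i _ => zpow_ne_zero _ RatFunc.X_ne_zero)
  · have hL : laurentCoeff (diagonal fun i => RatFunc.X ^ d i) k =
        diagonal fun i => if k = d i then (1 : F) else 0 := by
      ext i j
      rcases eq_or_ne i j with rfl | hij
      · simp [laurentCoeff, map_zpow₀, ← RatFunc.single_zpow, HahnSeries.coeff_single]
      · simp [laurentCoeff, hij]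
    rw [laurentCoeff_map_mul, ← mul_assoc, hAS, mul_assoc, ← Matrix.mul_smul, hL,
      diagonal_mul_diagonal, ← diagonal_smul]
    congr 2
    funext i
    by_cases hk : k = d i <;> simp [hk]

end RatFunc

end Matrix

open Matrix

theorem stmt17_general {F : Type*} [Field F] [CharZero F] {n : ℕ}
    (δ : RatFunc F → RatFunc F)
    (hadd : ∀ x y : RatFunc F, δ (x + y) = δ x + δ y)
    (hmul : ∀ x y : RatFunc F, δ (x * y) = δ x * y + x * δ y)
    (hF : ∀ a : F, δ (algebraMap F (RatFunc F) a) = 0)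
    (ht : δ RatFunc.X = RatFunc.X)
    (P : Matrix (Fin n) (Fin n) F) :
    (∃ Y : Matrix (Fin n) (Fin n) (RatFunc F), IsUnit Y.det ∧
        Y.map δ = (P.map (algebraMap F (RatFunc F)))ᵀ * Y) ↔
      ((∃ R D : Matrix (Fin n) (Fin n) (AlgebraicClosure F),
          IsUnit R.det ∧ D.IsDiag ∧
            P.map (algebraMap F (AlgebraicClosure F)) = R⁻¹ * D * R) ∧
        ∀ μ ∈ spectrum (AlgebraicClosure F) (P.map (algebraMap F (AlgebraicClosure F))),
          ∃ k : ℤ, μ = (k : AlgebraicClosure F)) := by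
  rw [← transpose_map]
  calc _ ↔ IsIntSemisimple Pᵀ :=
        exists_isUnit_map_derivation_eq_mul_iff (Derivation.ofLeibniz δ hadd hmul hF) ht Pᵀ
    _ ↔ IsIntSemisimple P := isIntSemisimple_transpose_iff
    _ ↔ IsIntSemisimple (P.map (algebraMap F (AlgebraicClosure F))) :=
        (isIntSemisimple_map_iff (a := P)
          (φ := (algebraMap F (AlgebraicClosure F)).toIntAlgHom.mapMatrix)
          (map_injective (algebraMap F (AlgebraicClosure F)).injective)).symm
    _ ↔ _ := isIntSemisimple_iff

/-- Let `K = F(t)` with `δ|_F = 0`, `δ(t) = t`, and `P ∈ Mₙ(F)` traceless. Then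
`(Mₙ(K), D_P)` is split over `(K, δ)` itself — i.e. `δᶜ(Y) = Pᵀ Y` has an invertible solution
over `K` — iff `P` is diagonalizable over the algebraic closure of `F` and all eigenvalues of
`P` are integers. -/
theorem stmt17 {F : Type*} [Field F] [CharZero F] {n : ℕ}
    (δ : RatFunc F → RatFunc F)
    (hadd : ∀ x y : RatFunc F, δ (x + y) = δ x + δ y)
    (hmul : ∀ x y : RatFunc F, δ (x * y) = δ x * y + x * δ y)
    (hF : ∀ a : F, δ (algebraMap F (RatFunc F) a) = 0)
    (ht : δ RatFunc.X = RatFunc.X)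
    (P : Matrix (Fin n) (Fin n) F) (htr : P.trace = 0) :
    (∃ Y : Matrix (Fin n) (Fin n) (RatFunc F), IsUnit Y.det ∧
        Y.map δ = (P.map (algebraMap F (RatFunc F)))ᵀ * Y) ↔
      ((∃ R D : Matrix (Fin n) (Fin n) (AlgebraicClosure F),
          IsUnit R.det ∧ D.IsDiag ∧
            P.map (algebraMap F (AlgebraicClosure F)) = R⁻¹ * D * R) ∧
        ∀ μ ∈ spectrum (AlgebraicClosure F) (P.map (algebraMap F (AlgebraicClosure F))),
          ∃ k : ℤ, μ = (k : AlgebraicClosure F)) :=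
  stmt17_general δ hadd hmul hF ht P
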